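/- arXiv:2402.19257 — 6 statements merged into one kernel-verified Lean document; each statement's English description precedes it below -/
import Mathlib

section
/- Let (G, ω, τ) be a weighted graph with the weighted incentive activation process, and let p* be any target vector (an incentive assignment activating all of V). Then ∑_{v ∈ V(G)} p*(v) ≥ ∑_{v ∈ V(G)} τ(v) − ∑_{e ∈ E(G)} ω(e). -/
open Finset

variable {V : Type*}

/-- Total weight of edges between `x` and active set `A`. -/
def Influence [Fintype V] [DecidableEq V] (G : SimpleGraph V) [DecidableRel G.Adj]
    (ω : Sym2 V → ℚ) (A : Finset V) (x : V) : ℚ :=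
  ∑ y ∈ A.filter (G.Adj x), ω s(x, y)

/-- Weighted activation process started from `A₀`. -/
def ActiveW [Fintype V] [DecidableEq V] (G : SimpleGraph V) [DecidableRel G.Adj]
    (ω : Sym2 V → ℚ) (τ : V → ℚ) (A₀ : Finset V) : ℕ → Finset V
  | 0 => A₀
  | t + 1 => ActiveW G ω τ A₀ t ∪
      Finset.univ.filter (fun x => τ x ≤ Influence G ω (ActiveW G ω τ A₀ t) x)

/-- `A₀` is a target set (dynamic monopoly): every vertex eventually activates. -/
def IsTargetSetW [Fintype V] [DecidableEq V] (G : SimpleGraph V) [DecidableRel G.Adj]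
    (ω : Sym2 V → ℚ) (τ : V → ℚ) (A₀ : Finset V) : Prop :=
  ∀ v : V, ∃ t, v ∈ ActiveW G ω τ A₀ t

/-- Incentive activation process for incentive assignment `p`. -/
def ActiveP [Fintype V] [DecidableEq V] (G : SimpleGraph V) [DecidableRel G.Adj]
    (ω : Sym2 V → ℚ) (τ : V → ℚ) (p : V → ℚ) : ℕ → Finset V
  | 0 => Finset.univ.filter (fun v => τ v ≤ p v)
  | t + 1 => ActiveP G ω τ p t ∪
      Finset.univ.filter (fun x => τ x ≤ Influence G ω (ActiveP G ω τ p t) x + p x)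

/-- `p` is a target vector: its incentive process activates every vertex. -/
def IsTargetVector [Fintype V] [DecidableEq V] (G : SimpleGraph V) [DecidableRel G.Adj]
    (ω : Sym2 V → ℚ) (τ : V → ℚ) (p : V → ℚ) : Prop :=
  ∀ v : V, ∃ t, v ∈ ActiveP G ω τ p t

/-- `τ` is a degenerate threshold assignment: every nonempty induced subgraph
(given by its vertex set `S`) has a vertex whose threshold is at least the total
weight of the edges of the induced subgraph incident to it. -/
def DegenerateW [Fintype V] [DecidableEq V] (G : SimpleGraph V) [DecidableRel G.Adj]
    (ω : Sym2 V → ℚ) (τ : V → ℚ) : Prop :=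
  ∀ S : Finset V, S.Nonempty → ∃ x ∈ S, Influence G ω S x ≤ τ x

/-- `u` is a degeneracy ordering: each vertex's threshold is at least the total
weight of edges to earlier vertices. -/
def IsDegOrder [Fintype V] [DecidableEq V] (G : SimpleGraph V) [DecidableRel G.Adj]
    (ω : Sym2 V → ℚ) (τ : V → ℚ) (u : Fin (Fintype.card V) ≃ V) : Prop :=
  ∀ i, (∑ j ∈ Finset.univ.filter (fun j => j < i ∧ G.Adj (u i) (u j)), ω s(u i, u j)) ≤ τ (u i)

/-- Unweighted activation process. -/
def ActiveU [Fintype V] [DecidableEq V] (G : SimpleGraph V) [DecidableRel G.Adj]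
    (τ : V → ℕ) (A₀ : Finset V) : ℕ → Finset V
  | 0 => A₀
  | t + 1 => ActiveU G τ A₀ t ∪
      Finset.univ.filter (fun x => τ x ≤ ((ActiveU G τ A₀ t).filter (G.Adj x)).card)

def IsTargetSetU [Fintype V] [DecidableEq V] (G : SimpleGraph V) [DecidableRel G.Adj]
    (τ : V → ℕ) (A₀ : Finset V) : Prop :=
  ∀ v : V, ∃ t, v ∈ ActiveU G τ A₀ t

/-!
Order the vertices by the round in which they activate. A vertex activating in round `t + 1`
satisfies `τ v ≤ p v + ω(edges from v to vertices active at round t)`, and those vertices all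
activated strictly earlier than `v`; a vertex active from the start satisfies `τ v ≤ p v`.
Summing over `v`, every edge is charged at most once, namely to its later endpoint.
-/

section Influence

variable [Fintype V] [DecidableEq V] {G : SimpleGraph V} [DecidableRel G.Adj] {ω : Sym2 V → ℚ}

lemma sum_influence_lt_le_sum_edgeFinset {α : Type*} [LinearOrder α]
    (hω : ∀ e ∈ G.edgeSet, 0 ≤ ω e) (f : V → α) :
    ∑ v, Influence G ω (univ.filter (f · < f v)) v ≤ ∑ e ∈ G.edgeFinset, ω e := by
  set P : Finset (V × V) := univ.filter fun q => G.Adj q.1 q.2 ∧ f q.2 < f q.1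
  have hsum : ∑ v, Influence G ω (univ.filter (f · < f v)) v = ∑ q ∈ P, ω s(q.1, q.2) := by
    refine (sum_finset_product (f := fun q => ω s(q.1, q.2)) P univ
      (fun v => (univ.filter (f · < f v)).filter (G.Adj v)) fun q => ?_).symm
    simp only [P, mem_filter, mem_univ, true_and]
    tauto
  have hinj : Set.InjOn (fun q : V × V => s(q.1, q.2)) P := by
    rintro ⟨a, b⟩ hab ⟨c, d⟩ hcd h
    simp only [P, coe_filter, mem_univ, true_and] at hab hcd
    rcases Sym2.eq_iff.1 h with ⟨rfl, rfl⟩ | ⟨rfl, rfl⟩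
    · rfl
    · exact absurd hab.2 hcd.2.asymm
  have hsub : P.image (fun q : V × V => s(q.1, q.2)) ⊆ G.edgeFinset := by
    simp only [subset_iff, mem_image, SimpleGraph.mem_edgeFinset]
    rintro _ ⟨q, hq, rfl⟩
    exact (mem_filter.1 hq).2.1
  rw [hsum, ← sum_image hinj]
  exact sum_le_sum_of_subset_of_nonneg hsub fun e he _ => hω e (SimpleGraph.mem_edgeFinset.1 he)

end Influence

namespace ActiveP

variable [Fintype V] [DecidableEq V] {G : SimpleGraph V} [DecidableRel G.Adj] {ω : Sym2 V → ℚ}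
  {τ p : V → ℚ}

lemma monotone : Monotone (ActiveP G ω τ p) :=
  monotone_nat_of_le_succ fun _ => subset_union_left

lemma threshold_le_of_mem_zero {v : V} (hv : v ∈ ActiveP G ω τ p 0) : τ v ≤ p v :=
  (mem_filter.1 hv).2

lemma threshold_le_of_mem_succ {v : V} {t : ℕ} (hv : v ∈ ActiveP G ω τ p (t + 1))
    (hv' : v ∉ ActiveP G ω τ p t) : τ v ≤ Influence G ω (ActiveP G ω τ p t) v + p v := by
  rcases mem_union.1 hv with h | h
  · exact absurd h hv'
  · exact (mem_filter.1 h).2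

end ActiveP

namespace IsTargetVector

variable [Fintype V] [DecidableEq V] {G : SimpleGraph V} [DecidableRel G.Adj] {ω : Sym2 V → ℚ}
  {τ p : V → ℚ}

def activationTime (htv : IsTargetVector G ω τ p) (v : V) : ℕ :=
  Nat.find (htv v)

lemma mem_activeP_iff (htv : IsTargetVector G ω τ p) {v : V} {t : ℕ} :
    v ∈ ActiveP G ω τ p t ↔ htv.activationTime v ≤ t :=
  ⟨Nat.find_min' (htv v), fun h => ActiveP.monotone h (Nat.find_spec (htv v))⟩

lemma threshold_le_influence_add (htv : IsTargetVector G ω τ p) (v : V) :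
    τ v ≤ Influence G ω (univ.filter (htv.activationTime · < htv.activationTime v)) v + p v := by
  have hv : v ∈ ActiveP G ω τ p (htv.activationTime v) := htv.mem_activeP_iff.2 le_rfl
  cases hN : htv.activationTime v with
  | zero =>
    simpa [Influence] using ActiveP.threshold_le_of_mem_zero (hN ▸ hv)
  | succ t =>
    have hearlier : univ.filter (htv.activationTime · < t + 1) = ActiveP G ω τ p t := by
      ext y
      simp [htv.mem_activeP_iff]
    rw [hearlier]
    exact ActiveP.threshold_le_of_mem_succ (hN ▸ hv) (by rw [htv.mem_activeP_iff]; omega)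

end IsTargetVector

theorem targetVector_lower_bound_general [Fintype V] [DecidableEq V] (G : SimpleGraph V)
    [DecidableRel G.Adj] (ω : Sym2 V → ℚ) (τ : V → ℚ) (p : V → ℚ)
    (hω : ∀ e ∈ G.edgeSet, 0 ≤ ω e)
    (htv : IsTargetVector G ω τ p) :
    ∑ v : V, τ v - ∑ e ∈ G.edgeFinset, ω e ≤ ∑ v : V, p v := by
  have hsum := sum_le_sum fun v (_ : v ∈ univ) => htv.threshold_le_influence_add v
  rw [sum_add_distrib] at hsum
  linarith [sum_influence_lt_le_sum_edgeFinset hω htv.activationTime]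

/-- any target vector has total size at least `∑ τ − ∑ ω`. -/
theorem targetVector_lower_bound [Fintype V] [DecidableEq V] (G : SimpleGraph V)
    [DecidableRel G.Adj] (ω : Sym2 V → ℚ) (τ : V → ℚ) (p : V → ℚ)
    (hω : ∀ e ∈ G.edgeSet, 0 ≤ ω e) (hτ : ∀ v, 0 ≤ τ v) (hp : ∀ v, 0 ≤ p v)
    (htv : IsTargetVector G ω τ p) :
    ∑ v : V, τ v - ∑ e ∈ G.edgeFinset, ω e ≤ ∑ v : V, p v :=
  targetVector_lower_bound_general G ω τ p hω htv
end

section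
/- Let (G, ω, τ) be a weighted graph where τ is a degenerate threshold assignment. Then the minimum total size of a target vector equals ∑_{v ∈ V(G)} τ(v) − ∑_{e ∈ E(G)} ω(e); in particular a target vector of exactly this total size exists. -/
open Finset

variable {V : Type*}

/-!
A target vector `p` is the same thing as a ranking `r : V → ℕ` of the vertices with
`τ v ≤ p v + ω(edges from v to lower-ranked vertices)`: given `p`, rank by activation time;
given `r`, the vertices of rank `< n` are active after `n` rounds. Summing over `v`, each edge is
counted at most once, and exactly once when `r` is injective, so every target vector has size at
least `∑ τ - ∑ ω`. Degeneracy yields, by repeatedly removing a vertex whose threshold covers its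
edges to the rest, an injective ranking whose back-weights are at most `τ`, and
`p = τ - backWeight` is then a target vector of size exactly `∑ τ - ∑ ω`.
-/

section Ranking

variable [Fintype V] [DecidableEq V] (G : SimpleGraph V) [DecidableRel G.Adj]
  (ω : Sym2 V → ℚ) (τ : V → ℚ)

theorem influence_mono (hω : ∀ e ∈ G.edgeSet, 0 ≤ ω e) {A B : Finset V} (h : A ⊆ B) (x : V) :
    Influence G ω A x ≤ Influence G ω B x :=
  sum_le_sum_of_subset_of_nonneg (filter_subset_filter _ h) fun y hy _ =>
    hω _ (G.mem_edgeSet.2 (mem_filter.1 hy).2)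

def backWeight (r : V → ℕ) (v : V) : ℚ :=
  Influence G ω (univ.filter fun y => r y < r v) v

def backEdges (r : V → ℕ) : Finset (Sym2 V) :=
  (univ.filter fun q : V × V => G.Adj q.1 q.2 ∧ r q.2 < r q.1).image
    fun q => s(q.1, q.2)

theorem sum_backWeight (r : V → ℕ) : ∑ v, backWeight G ω r v = ∑ e ∈ backEdges G r, ω e := by
  rw [backEdges, sum_image]
  · refine (sum_finset_product (f := fun q : V × V => ω s(q.1, q.2)) _ _ _ fun q => ?_).symm
    simp [and_comm]
  · rintro ⟨a, b⟩ hab ⟨c, d⟩ hcd h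
    simp only [coe_filter, Set.mem_ofPred_eq, mem_univ, true_and] at hab hcd
    rcases Sym2.eq_iff.1 h with ⟨rfl, rfl⟩ | ⟨rfl, rfl⟩
    · rfl
    · exact absurd hab.2 hcd.2.asymm

theorem backEdges_subset (r : V → ℕ) : backEdges G r ⊆ G.edgeFinset := by
  simp only [backEdges, image_subset_iff, mem_filter, mem_univ, true_and,
    SimpleGraph.mem_edgeFinset, SimpleGraph.mem_edgeSet]
  exact fun q hq => hq.1

theorem backEdges_eq_of_injective {r : V → ℕ} (hr : Function.Injective r) :
    backEdges G r = G.edgeFinset := by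
  refine (backEdges_subset G r).antisymm fun e he => ?_
  induction e with
  | _ a b =>
    rw [SimpleGraph.mem_edgeFinset, SimpleGraph.mem_edgeSet] at he
    simp only [backEdges, mem_image, mem_filter, mem_univ, true_and]
    rcases (hr.ne he.ne).lt_or_gt with h | h
    · exact ⟨(b, a), ⟨he.symm, h⟩, Sym2.eq_swap⟩
    · exact ⟨(a, b), ⟨he, h⟩, rfl⟩

theorem sum_backWeight_le (hω : ∀ e ∈ G.edgeSet, 0 ≤ ω e) (r : V → ℕ) :
    ∑ v, backWeight G ω r v ≤ ∑ e ∈ G.edgeFinset, ω e := by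
  rw [sum_backWeight]
  exact sum_le_sum_of_subset_of_nonneg (backEdges_subset G r) fun e he _ =>
    hω e (SimpleGraph.mem_edgeFinset.1 he)

theorem sum_backWeight_of_injective {r : V → ℕ} (hr : Function.Injective r) :
    ∑ v, backWeight G ω r v = ∑ e ∈ G.edgeFinset, ω e := by
  rw [sum_backWeight, backEdges_eq_of_injective G hr]

theorem isTargetVector_iff_exists_ranking (hω : ∀ e ∈ G.edgeSet, 0 ≤ ω e) {p : V → ℚ} :
    IsTargetVector G ω τ p ↔ ∃ r : V → ℕ, ∀ v, τ v ≤ backWeight G ω r v + p v := by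
  constructor
  · intro hp
    refine ⟨fun v => Nat.find (hp v), fun v => ?_⟩
    have hv := Nat.find_spec (hp v)
    rcases hT : Nat.find (hp v) with _ | k
    · rw [hT] at hv
      simp only [ActiveP, mem_filter, mem_univ, true_and] at hv
      have hback : 0 ≤ backWeight G ω (fun v => Nat.find (hp v)) v :=
        sum_nonneg fun y hy => hω _ (G.mem_edgeSet.2 (mem_filter.1 hy).2)
      linarith
    · have hvk : v ∉ ActiveP G ω τ p k := Nat.find_min (hp v) (by omega)
      rw [hT, ActiveP, mem_union, or_iff_right hvk, mem_filter] at hv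
      refine hv.2.trans (add_le_add_left (influence_mono G ω hω (fun y hy => ?_) v) _)
      have := Nat.find_min' (hp y) hy
      simp only [mem_filter, mem_univ, true_and, hT]
      omega
  · rintro ⟨r, hr⟩ v
    suffices h : ∀ n, univ.filter (fun y => r y < n) ⊆ ActiveP G ω τ p n from
      ⟨r v + 1, h _ (by simp)⟩
    intro n
    induction n with
    | zero => simp
    | succ n ih =>
      intro y hy
      rw [mem_filter] at hy
      rcases (Nat.lt_succ_iff.1 hy.2).lt_or_eq with hlt | rfl
      · exact mem_union_left _ (ih (by simp [hlt]))
      · refine mem_union_right _ (mem_filter.2 ⟨mem_univ y, (hr y).trans ?_⟩)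
        exact add_le_add_left (influence_mono G ω hω ih y) _

theorem DegenerateW.exists_ranking_on (hω : ∀ e ∈ G.edgeSet, 0 ≤ ω e) (hdeg : DegenerateW G ω τ)
    (S : Finset V) : ∃ r : V → ℕ, Set.InjOn r S ∧
      ∀ v ∈ S, Influence G ω (S.filter fun y => r y < r v) v ≤ τ v := by
  induction S using Finset.strongInduction with
  | _ S ih =>
    rcases S.eq_empty_or_nonempty with rfl | hne
    · exact ⟨0, by simp, by simp⟩
    obtain ⟨x, hxS, hx⟩ := hdeg S hne
    obtain ⟨r, hr, hrτ⟩ := ih (S.erase x) (erase_ssubset hxS)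
    -- `x` goes last, so it only sees edges inside `S`, which its threshold covers.
    set N := (S.erase x).sup r + 1
    have hN : ∀ y ∈ S.erase x, r y < N := fun y hy => Nat.lt_succ_of_le (le_sup hy)
    have hr' : Set.EqOn (Function.update r x N) r ↑(S.erase x) := fun y hy =>
      Function.update_of_ne (ne_of_mem_erase hy) _ _
    refine ⟨Function.update r x N, ?_, fun v hv => ?_⟩
    · rw [← insert_erase hxS, coe_insert, Set.injOn_insert (notMem_erase x S)]
      refine ⟨hr.congr hr'.symm, ?_⟩
      rintro ⟨y, hy, hyN⟩
      rw [Function.update_self, hr' hy] at hyN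
      exact (hN y hy).ne hyN
    obtain rfl | hvx := eq_or_ne v x
    · exact (influence_mono G ω hω (filter_subset _ S) v).trans hx
    have hv' : v ∈ S.erase x := mem_erase.2 ⟨hvx, hv⟩
    refine le_trans (influence_mono G ω hω (fun y hy => ?_) v) (hrτ v hv')
    rw [mem_filter, hr' hv'] at hy
    have hyx : y ≠ x := by
      rintro rfl
      rw [Function.update_self] at hy
      exact (hN v hv').not_gt hy.2
    have hy' : y ∈ S.erase x := mem_erase.2 ⟨hyx, hy.1⟩
    rw [hr' hy'] at hy
    exact mem_filter.2 ⟨hy', hy.2⟩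

theorem DegenerateW.exists_injective_ranking (hω : ∀ e ∈ G.edgeSet, 0 ≤ ω e)
    (hdeg : DegenerateW G ω τ) :
    ∃ r : V → ℕ, Function.Injective r ∧ ∀ v, backWeight G ω r v ≤ τ v := by
  obtain ⟨r, hr, hrτ⟩ := hdeg.exists_ranking_on G ω τ hω univ
  exact ⟨r, Set.injOn_univ.1 (by simpa using hr), fun v => hrτ v (mem_univ v)⟩

end Ranking

theorem degenerate_optimal_target_vector_general [Fintype V] [DecidableEq V] (G : SimpleGraph V)
    [DecidableRel G.Adj] (ω : Sym2 V → ℚ) (τ : V → ℚ)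
    (hω : ∀ e ∈ G.edgeSet, 0 ≤ ω e)
    (hdeg : DegenerateW G ω τ) :
    IsLeast {s : ℚ | ∃ p : V → ℚ, (∀ v, 0 ≤ p v) ∧ IsTargetVector G ω τ p ∧
        ∑ v : V, p v = s}
      (∑ v : V, τ v - ∑ e ∈ G.edgeFinset, ω e) := by
  obtain ⟨r, hr, hrτ⟩ := hdeg.exists_injective_ranking G ω τ hω
  refine ⟨⟨fun v => τ v - backWeight G ω r v, fun v => sub_nonneg.2 (hrτ v), ?_, ?_⟩, ?_⟩
  · exact (isTargetVector_iff_exists_ranking G ω τ hω).2 ⟨r, fun v => by simp⟩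
  · rw [sum_sub_distrib, sum_backWeight_of_injective G ω hr]
  · rintro s ⟨p, -, hp, rfl⟩
    obtain ⟨T, hT⟩ := (isTargetVector_iff_exists_ranking G ω τ hω).1 hp
    have hsum := sum_le_sum fun v (_ : v ∈ univ) => hT v
    rw [sum_add_distrib] at hsum
    linarith [sum_backWeight_le G ω hω T]

/-- for degenerate thresholds, the minimum total size of a target
vector equals `∑ τ − ∑ ω`, and this minimum is attained. -/
theorem degenerate_optimal_target_vector [Fintype V] [DecidableEq V] (G : SimpleGraph V)
    [DecidableRel G.Adj] (ω : Sym2 V → ℚ) (τ : V → ℚ)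
    (hω : ∀ e ∈ G.edgeSet, 0 ≤ ω e) (hτ : ∀ v, 0 ≤ τ v)
    (hdeg : DegenerateW G ω τ) :
    IsLeast {s : ℚ | ∃ p : V → ℚ, (∀ v, 0 ≤ p v) ∧ IsTargetVector G ω τ p ∧
        ∑ v : V, p v = s}
      (∑ v : V, τ v - ∑ e ∈ G.edgeFinset, ω e) :=
  degenerate_optimal_target_vector_general G ω τ hω hdeg
end

section
/- Let (G, ω, τ) be a weighted graph with weighted activation process, and let S* be any target set of (G, ω, τ). Then ∑_{u ∈ V(G)∖S*} τ(u) ≤ ∑_{e ∈ E(G)} ω(e). -/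
open Finset

variable {V : Type*}

/-!
Charge the threshold of every vertex `v ∉ S*` to the edges joining `v` to vertices that were
already active in the round before `v` activated; by the activation rule these edges carry total
weight at least `τ v`. An edge `xy` is charged only to whichever of `x`, `y` activated strictly
later, so it is charged at most once, and the charges sum to at most the total edge weight.
-/

namespace SimpleGraph

theorem sum_sum_lt_le_sum_edgeFinset [Fintype V] [DecidableEq V] (G : SimpleGraph V)
    [DecidableRel G.Adj] {M : Type*} [AddCommMonoid M] [PartialOrder M] [IsOrderedAddMonoid M]
    {α : Type*} [Preorder α] [DecidableLT α] (ω : Sym2 V → M) (hω : ∀ e ∈ G.edgeSet, 0 ≤ ω e)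
    (f : V → α) :
    ∑ v, ∑ y with G.Adj v y ∧ f y < f v, ω s(v, y) ≤ ∑ e ∈ G.edgeFinset, ω e := by
  set P := (univ ×ˢ univ).filter fun p : V × V => G.Adj p.1 p.2 ∧ f p.2 < f p.1
  have hsum : ∑ v, ∑ y with G.Adj v y ∧ f y < f v, ω s(v, y) = ∑ p ∈ P, ω s(p.1, p.2) := by
    simp only [P, sum_filter]
    exact (sum_product' univ univ fun x y => if G.Adj x y ∧ f y < f x then ω s(x, y) else 0).symm
  have hinj : Set.InjOn (fun p : V × V => s(p.1, p.2)) P := by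
    rintro ⟨x, y⟩ hxy ⟨x', y'⟩ hxy' heq
    simp only [P, coe_filter, mem_product, mem_univ, true_and, Set.mem_ofPred_eq] at hxy hxy'
    rcases Sym2.eq_iff.mp heq with ⟨rfl, rfl⟩ | ⟨rfl, rfl⟩
    · rfl
    · exact absurd (hxy.2.trans hxy'.2) (lt_irrefl _)
  have himage : P.image (fun p : V × V => s(p.1, p.2)) ⊆ G.edgeFinset := by
    simp only [subset_iff, mem_image, mem_edgeFinset]
    rintro _ ⟨⟨x, y⟩, hxy, rfl⟩
    exact (mem_filter.mp hxy).2.1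
  rw [hsum, ← sum_image hinj]
  exact sum_le_sum_of_subset_of_nonneg himage fun e he _ => hω e (mem_edgeFinset.mp he)

end SimpleGraph

section ActivationTime

variable [Fintype V] [DecidableEq V] {G : SimpleGraph V} [DecidableRel G.Adj]
  {ω : Sym2 V → ℚ} {τ : V → ℚ} {A₀ : Finset V}

theorem activeW_monotone : Monotone (ActiveW G ω τ A₀) :=
  monotone_nat_of_le_succ fun _ => subset_union_left

def activationTime (hA₀ : IsTargetSetW G ω τ A₀) (v : V) : ℕ :=
  Nat.find (hA₀ v)

variable (hA₀ : IsTargetSetW G ω τ A₀)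

theorem mem_activeW_iff_activationTime_le {v : V} {t : ℕ} :
    v ∈ ActiveW G ω τ A₀ t ↔ activationTime hA₀ v ≤ t := by
  rw [activationTime, Nat.find_le_iff]
  exact ⟨fun hv => ⟨t, le_rfl, hv⟩, fun ⟨s, hst, hv⟩ => activeW_monotone hst hv⟩

theorem activationTime_eq_zero_iff {v : V} : activationTime hA₀ v = 0 ↔ v ∈ A₀ :=
  Nat.find_eq_zero (hA₀ v)

theorem le_influence_of_activationTime_eq_succ {v : V} {t : ℕ}
    (hv : activationTime hA₀ v = t + 1) : τ v ≤ Influence G ω (ActiveW G ω τ A₀ t) v := by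
  have hnow : v ∈ ActiveW G ω τ A₀ (t + 1) := (mem_activeW_iff_activationTime_le hA₀).mpr hv.le
  have hbefore : v ∉ ActiveW G ω τ A₀ t := by
    rw [mem_activeW_iff_activationTime_le hA₀, hv]
    omega
  simp only [ActiveW, mem_union, hbefore, false_or, mem_filter, mem_univ, true_and] at hnow
  exact hnow

theorem le_sum_of_activationTime_lt {v : V} (hv : v ∉ A₀) :
    τ v ≤ ∑ y with G.Adj v y ∧ activationTime hA₀ y < activationTime hA₀ v, ω s(v, y) := by
  obtain ⟨t, ht⟩ := Nat.exists_eq_succ_of_ne_zero ((activationTime_eq_zero_iff hA₀).not.mpr hv)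
  refine (le_influence_of_activationTime_eq_succ hA₀ ht).trans_eq (sum_congr ?_ fun _ _ => rfl)
  ext y
  simp only [mem_filter, mem_univ, true_and, mem_activeW_iff_activationTime_le hA₀, ht,
    Nat.lt_succ_iff]
  exact and_comm

end ActivationTime

theorem sum_tau_outside_targetSet_le_general [Fintype V] [DecidableEq V] (G : SimpleGraph V)
    [DecidableRel G.Adj] (ω : Sym2 V → ℚ) (τ : V → ℚ)
    (hω : ∀ e ∈ G.edgeSet, 0 ≤ ω e)
    (S : Finset V) (hS : IsTargetSetW G ω τ S) :
    ∑ v ∈ Finset.univ \ S, τ v ≤ ∑ e ∈ G.edgeFinset, ω e := by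
  set f := activationTime hS
  have hcharge_nonneg : ∀ v, 0 ≤ ∑ y with G.Adj v y ∧ f y < f v, ω s(v, y) := fun v =>
    sum_nonneg fun y hy => hω _ (mem_filter.mp hy).2.1
  calc ∑ v ∈ univ \ S, τ v
      ≤ ∑ v ∈ univ \ S, ∑ y with G.Adj v y ∧ f y < f v, ω s(v, y) :=
        sum_le_sum fun v hv => le_sum_of_activationTime_lt hS (mem_sdiff.mp hv).2
    _ ≤ ∑ v, ∑ y with G.Adj v y ∧ f y < f v, ω s(v, y) :=
        sum_le_sum_of_subset_of_nonneg (subset_univ _) fun v _ _ => hcharge_nonneg v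
    _ ≤ ∑ e ∈ G.edgeFinset, ω e := G.sum_sum_lt_le_sum_edgeFinset ω hω f

/-- for any target set `S*`, the thresholds outside `S*` sum to at
most the total edge weight. -/
theorem sum_tau_outside_targetSet_le [Fintype V] [DecidableEq V] (G : SimpleGraph V)
    [DecidableRel G.Adj] (ω : Sym2 V → ℚ) (τ : V → ℚ)
    (hω : ∀ e ∈ G.edgeSet, 0 ≤ ω e) (hτ : ∀ v, 0 ≤ τ v)
    (S : Finset V) (hS : IsTargetSetW G ω τ S) :
    ∑ v ∈ Finset.univ \ S, τ v ≤ ∑ e ∈ G.edgeFinset, ω e :=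
  sum_tau_outside_targetSet_le_general G ω τ hω S hS
end

section
/- Let (G, τ) be a simple graph on n ≥ 2 vertices with integer thresholds 1 ≤ τ(v) ≤ deg_G(v). Construct the weighted complete graph (K_n, ω, τ′) on the same vertex set, with τ′(v) = n·τ(v), ω(e) = n if e ∈ E(G), and ω(e) = 1 if e ∉ E(G). Then any set D ⊆ V that is a target set for (G, τ) under the unweighted activation process is also a target set for (K_n, ω, τ′) under the weighted activation process. -/
/-!
Every edge of `G` has weight `n` in `K_n`, so `n` times the number of active `G`-neighbours of a
vertex never exceeds its weighted influence. Hence the unweighted activation condition implies the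
weighted one on the same active set, and by induction on the rounds the weighted process stays
ahead of the unweighted one.
-/

open Finset

variable {V : Type*}

instance [DecidableEq V] : DecidableRel (⊤ : SimpleGraph V).Adj :=
  fun x y => inferInstanceAs (Decidable (x ≠ y))

section Activation

variable [Fintype V] [DecidableEq V] {G H : SimpleGraph V} [DecidableRel G.Adj] [DecidableRel H.Adj]

theorem mul_card_filter_adj_le_influence {ω : Sym2 V → ℚ} {c : ℚ} (hGH : G ≤ H)
    (hω : ∀ e, 0 ≤ ω e) (hc : ∀ x y, G.Adj x y → c ≤ ω s(x, y)) (A : Finset V) (x : V) :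
    c * #(A.filter (G.Adj x)) ≤ Influence H ω A x :=
  calc c * #(A.filter (G.Adj x)) = ∑ _y ∈ A.filter (G.Adj x), c := by
        rw [sum_const, nsmul_eq_mul, mul_comm]
    _ ≤ ∑ y ∈ A.filter (G.Adj x), ω s(x, y) :=
        sum_le_sum fun y hy => hc x y (mem_filter.mp hy).2
    _ ≤ Influence H ω A x :=
        sum_le_sum_of_subset_of_nonneg (monotone_filter_right A fun _ _ h => hGH h)
          fun _ _ _ => hω _

theorem activeU_subset_activeW {τ : V → ℕ} {ω : Sym2 V → ℚ} {τ' : V → ℚ}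
    (hact : ∀ x A, τ x ≤ #(A.filter (G.Adj x)) → τ' x ≤ Influence H ω A x) (D : Finset V) :
    ∀ t, ActiveU G τ D t ⊆ ActiveW H ω τ' D t
  | 0 => subset_rfl
  | t + 1 => by
    have ih := activeU_subset_activeW hact D t
    rw [ActiveU, ActiveW]
    refine union_subset_union ih fun x hx => mem_filter.mpr ⟨mem_univ x, hact x _ ?_⟩
    exact (mem_filter.mp hx).2.trans (card_le_card (filter_subset_filter _ ih))

theorem IsTargetSetU.isTargetSetW {τ : V → ℕ} {ω : Sym2 V → ℚ} {τ' : V → ℚ} {D : Finset V}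
    (hD : IsTargetSetU G τ D)
    (hact : ∀ x A, τ x ≤ #(A.filter (G.Adj x)) → τ' x ≤ Influence H ω A x) :
    IsTargetSetW H ω τ' D := fun v =>
  let ⟨t, hv⟩ := hD v
  ⟨t, activeU_subset_activeW hact D t hv⟩

end Activation

theorem targetSet_to_weighted_complete_general [Fintype V] [DecidableEq V] (G : SimpleGraph V)
    [DecidableRel G.Adj] (τ : V → ℕ)
    (D : Finset V) (hD : IsTargetSetU G τ D) :
    IsTargetSetW (⊤ : SimpleGraph V)
      (fun e => if e ∈ G.edgeFinset then (Fintype.card V : ℚ) else 1)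
      (fun v => (Fintype.card V : ℚ) * τ v) D := by
  refine hD.isTargetSetW fun x A hx => ?_
  have hω : ∀ e, (0 : ℚ) ≤ if e ∈ G.edgeFinset then (Fintype.card V : ℚ) else 1 := fun e => by
    split_ifs <;> positivity
  have hc : ∀ u v, G.Adj u v →
      (Fintype.card V : ℚ) ≤ if s(u, v) ∈ G.edgeFinset then (Fintype.card V : ℚ) else 1 :=
    fun u v h => by simp [SimpleGraph.mem_edgeFinset, h]
  calc (Fintype.card V : ℚ) * τ x ≤ Fintype.card V * #(A.filter (G.Adj x)) := by gcongr
    _ ≤ _ := mul_card_filter_adj_le_influence le_top hω hc A x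

/-- a target set for `(G, τ)` is a target set for the associated
weighted complete graph `(K_n, ω, τ')`. -/
theorem targetSet_to_weighted_complete [Fintype V] [DecidableEq V] (G : SimpleGraph V)
    [DecidableRel G.Adj] (τ : V → ℕ)
    (hn : 2 ≤ Fintype.card V)
    (hτ : ∀ v, 1 ≤ τ v ∧ τ v ≤ G.degree v)
    (D : Finset V) (hD : IsTargetSetU G τ D) :
    IsTargetSetW (⊤ : SimpleGraph V)
      (fun e => if e ∈ G.edgeFinset then (Fintype.card V : ℚ) else 1)
      (fun v => (Fintype.card V : ℚ) * τ v) D :=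
  targetSet_to_weighted_complete_general G τ D hD
end

section
/- Let (G, τ) be a simple graph on n ≥ 2 vertices with integer thresholds 1 ≤ τ(v) ≤ deg_G(v), and (K_n, ω, τ′) the weighted complete graph with τ′(v) = n·τ(v), ω(e) = n for e ∈ E(G) and ω(e) = 1 for e ∉ E(G). Then any target set W ⊆ V for (K_n, ω, τ′) under the weighted activation process is also a target set for (G, τ) under the unweighted activation process. -/
open Finset

variable {V : Type*}

/-!
Every vertex `x` has at most `n - 1` non-neighbours, so in `(K_n, ω)` its non-neighbours
contribute less than `n` to its influence, while each active `G`-neighbour contributes `n`.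
Hence `n·τ(x) ≤ n·d + (n - 1)` forces `τ(x) ≤ d`, where `d` counts active `G`-neighbours:
every vertex activated by the weighted process is activated by the unweighted one at the
same step, and the two processes stay nested.
-/

section

variable [Fintype V] [DecidableEq V]

theorem activeW_subset_activeU {H G : SimpleGraph V} [DecidableRel H.Adj] [DecidableRel G.Adj]
    {ω : Sym2 V → ℚ} {τ' : V → ℚ} {τ : V → ℕ} (W : Finset V)
    (hstep : ∀ A x, τ' x ≤ Influence H ω A x → τ x ≤ #(A.filter (G.Adj x))) :
    ∀ t, ActiveW H ω τ' W t ⊆ ActiveU G τ W t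
  | 0 => subset_rfl
  | t + 1 => by
    have ih := activeW_subset_activeU W hstep t
    refine union_subset_union ih fun x hx => ?_
    simp only [mem_filter, mem_univ, true_and] at hx ⊢
    exact (hstep _ x hx).trans (card_le_card (filter_subset_filter _ ih))

theorem IsTargetSetW.isTargetSetU {H G : SimpleGraph V} [DecidableRel H.Adj] [DecidableRel G.Adj]
    {ω : Sym2 V → ℚ} {τ' : V → ℚ} {τ : V → ℕ} {W : Finset V}
    (hW : IsTargetSetW H ω τ' W)
    (hstep : ∀ A x, τ' x ≤ Influence H ω A x → τ x ≤ #(A.filter (G.Adj x))) :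
    IsTargetSetU G τ W := fun v =>
  let ⟨t, hv⟩ := hW v
  ⟨t, activeW_subset_activeU W hstep t hv⟩

theorem influence_top_edgeWeight (G : SimpleGraph V) [DecidableRel G.Adj] (c : ℚ)
    (A : Finset V) (x : V) :
    Influence ⊤ (fun e => if e ∈ G.edgeFinset then c else 1) A x =
      c * #(A.filter (G.Adj x)) + #((A.erase x).filter (fun y => ¬G.Adj x y)) := by
  have hA : A.filter ((⊤ : SimpleGraph V).Adj x) = A.erase x := by
    ext y; simp [and_comm, eq_comm]
  have hadj : (A.erase x).filter (G.Adj x) = A.filter (G.Adj x) := by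
    ext y; simp only [mem_filter, mem_erase]
    exact ⟨fun h => ⟨h.1.2, h.2⟩, fun h => ⟨⟨h.2.ne', h.1⟩, h.2⟩⟩
  have hedge : ∀ y ∈ A.filter (G.Adj x), (if s(x, y) ∈ G.edgeFinset then c else 1) = c :=
    fun y hy => if_pos (G.mem_edgeFinset.2 (mem_filter.1 hy).2)
  have hnonedge : ∀ y ∈ (A.erase x).filter (fun y => ¬G.Adj x y),
      (if s(x, y) ∈ G.edgeFinset then c else 1) = 1 :=
    fun y hy => if_neg (mt G.mem_edgeFinset.1 (mem_filter.1 hy).2)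
  rw [Influence, hA, ← sum_filter_add_sum_filter_not _ (G.Adj x), hadj,
    sum_congr rfl hedge, sum_congr rfl hnonedge]
  simp [mul_comm]

theorem threshold_le_card_of_le_influence_top (G : SimpleGraph V) [DecidableRel G.Adj]
    (τ : V → ℕ) (A : Finset V) (x : V)
    (hx : (Fintype.card V : ℚ) * τ x ≤
      Influence ⊤ (fun e => if e ∈ G.edgeFinset then (Fintype.card V : ℚ) else 1) A x) :
    τ x ≤ #(A.filter (G.Adj x)) := by
  set n := Fintype.card V
  set k := #((A.erase x).filter (fun y => ¬G.Adj x y))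
  have hk : k < n := calc
    k ≤ #(univ.erase x) :=
      (card_filter_le _ _).trans (card_le_card (erase_subset_erase x (subset_univ A)))
    _ < n := card_erase_lt_of_mem (mem_univ x)
  rw [influence_top_edgeWeight] at hx
  have hx' : n * τ x < n * (#(A.filter (G.Adj x)) + 1) := by
    rw [mul_add_one]
    have : (n : ℚ) * τ x < n * #(A.filter (G.Adj x)) + n := hx.trans_lt (by gcongr)
    exact_mod_cast this
  exact Nat.lt_succ_iff.1 (Nat.lt_of_mul_lt_mul_left hx')

end

theorem targetSet_from_weighted_complete_general [Fintype V] [DecidableEq V] (G : SimpleGraph V)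
    [DecidableRel G.Adj] (τ : V → ℕ)
    (W : Finset V)
    (hW : IsTargetSetW (⊤ : SimpleGraph V)
      (fun e => if e ∈ G.edgeFinset then (Fintype.card V : ℚ) else 1)
      (fun v => (Fintype.card V : ℚ) * τ v) W) :
    IsTargetSetU G τ W :=
  hW.isTargetSetU (threshold_le_card_of_le_influence_top G τ)

/-- a target set for the associated weighted complete graph
`(K_n, ω, τ')` is a target set for `(G, τ)`. -/
theorem targetSet_from_weighted_complete [Fintype V] [DecidableEq V] (G : SimpleGraph V)
    [DecidableRel G.Adj] (τ : V → ℕ)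
    (hn : 2 ≤ Fintype.card V)
    (hτ : ∀ v, 1 ≤ τ v ∧ τ v ≤ G.degree v)
    (W : Finset V)
    (hW : IsTargetSetW (⊤ : SimpleGraph V)
      (fun e => if e ∈ G.edgeFinset then (Fintype.card V : ℚ) else 1)
      (fun v => (Fintype.card V : ℚ) * τ v) W) :
    IsTargetSetU G τ W :=
  targetSet_from_weighted_complete_general G τ W hW
end

section
/- Let (G, τ) be a simple graph on n ≥ 2 vertices with integer thresholds 1 ≤ τ(v) ≤ deg_G(v), and (K_n, ω, τ′) the associated weighted complete graph (τ′(v) = n·τ(v); ω(e) = n for e ∈ E(G), ω(e) = 1 otherwise). Then the minimum size of a target set for (G, τ) equals the minimum size of a target set for (K_n, ω, τ′). -/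
open Finset

variable {V : Type*}

/-!
Give the edges of `G` weight `n = |V|` and the non-edges weight `1`. A vertex `x` with `d`
active `G`-neighbours and `r` active non-neighbours then receives weight `n * d + r`, and
`r < n` because `x` itself is never counted, so `n * τ x ≤ n * d + r` holds exactly when
`τ x ≤ d`. Hence the weighted process on `K_n` and the unweighted process on `G` activate the
same vertices at every step, and the two families of target sets coincide.
-/

theorem Nat.mul_le_mul_add_iff_of_lt {n d r t : ℕ} (hr : r < n) :
    n * t ≤ n * d + r ↔ t ≤ d := by
  rw [mul_comm n t, ← Nat.le_div_iff_mul_le (by omega), Nat.mul_add_div (by omega),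
    Nat.div_eq_of_lt hr, add_zero]

section CompleteGraph

variable [Fintype V] [DecidableEq V] (G : SimpleGraph V) [DecidableRel G.Adj]

theorem influence_top_ite_mem_edgeFinset (a b : ℚ) (A : Finset V) (x : V) :
    Influence (⊤ : SimpleGraph V) (fun e => if e ∈ G.edgeFinset then a else b) A x =
      a * (A.filter (G.Adj x)).card + b * (A.filter (fun y => x ≠ y ∧ ¬ G.Adj x y)).card := by
  have hadj : (A.filter ((⊤ : SimpleGraph V).Adj x)).filter (G.Adj x) = A.filter (G.Adj x) := by
    ext y
    simp only [mem_filter, SimpleGraph.top_adj, and_congr_left_iff, and_iff_left_iff_imp]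
    exact fun h _ => G.ne_of_adj h
  have hnonadj : (A.filter ((⊤ : SimpleGraph V).Adj x)).filter (fun y => ¬ G.Adj x y) =
      A.filter (fun y => x ≠ y ∧ ¬ G.Adj x y) := by
    ext y
    simp only [mem_filter, SimpleGraph.top_adj, and_assoc]
  simp only [Influence, SimpleGraph.mem_edgeFinset, SimpleGraph.mem_edgeSet]
  rw [sum_ite, sum_const, sum_const, hadj, hnonadj, nsmul_eq_mul, nsmul_eq_mul, mul_comm a,
    mul_comm b]

theorem card_mul_le_influence_top_iff (τ : V → ℕ) (A : Finset V) (x : V) :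
    (Fintype.card V : ℚ) * τ x ≤
        Influence (⊤ : SimpleGraph V)
          (fun e => if e ∈ G.edgeFinset then (Fintype.card V : ℚ) else 1) A x ↔
      τ x ≤ (A.filter (G.Adj x)).card := by
  have hnonadj : (A.filter (fun y => x ≠ y ∧ ¬ G.Adj x y)).card < Fintype.card V :=
    card_lt_univ_of_notMem (x := x) (by simp)
  rw [influence_top_ite_mem_edgeFinset, one_mul, ← Nat.mul_le_mul_add_iff_of_lt hnonadj]
  exact_mod_cast Iff.rfl

theorem activeW_top_eq_activeU (τ : V → ℕ) (D : Finset V) (t : ℕ) :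
    ActiveW (⊤ : SimpleGraph V)
        (fun e => if e ∈ G.edgeFinset then (Fintype.card V : ℚ) else 1)
        (fun v => (Fintype.card V : ℚ) * τ v) D t =
      ActiveU G τ D t := by
  induction t with
  | zero => rfl
  | succ t ih =>
    simp only [ActiveW, ActiveU, ih, card_mul_le_influence_top_iff]

theorem isTargetSetW_top_iff_isTargetSetU (τ : V → ℕ) (D : Finset V) :
    IsTargetSetW (⊤ : SimpleGraph V)
        (fun e => if e ∈ G.edgeFinset then (Fintype.card V : ℚ) else 1)
        (fun v => (Fintype.card V : ℚ) * τ v) D ↔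
      IsTargetSetU G τ D := by
  simp only [IsTargetSetW, IsTargetSetU, activeW_top_eq_activeU]

end CompleteGraph

theorem dyn_eq_dyn_weighted_complete_general [Fintype V] [DecidableEq V] (G : SimpleGraph V)
    [DecidableRel G.Adj] (τ : V → ℕ) :
    sInf {k : ℕ | ∃ D : Finset V, IsTargetSetU G τ D ∧ D.card = k} =
      sInf {k : ℕ | ∃ D : Finset V,
        IsTargetSetW (⊤ : SimpleGraph V)
          (fun e => if e ∈ G.edgeFinset then (Fintype.card V : ℚ) else 1)
          (fun v => (Fintype.card V : ℚ) * τ v) D ∧ D.card = k} := by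
  simp only [isTargetSetW_top_iff_isTargetSetU]

/-- the minimum target-set sizes of `(G, τ)` and of the associated
weighted complete graph coincide. -/
theorem dyn_eq_dyn_weighted_complete [Fintype V] [DecidableEq V] (G : SimpleGraph V)
    [DecidableRel G.Adj] (τ : V → ℕ)
    (hn : 2 ≤ Fintype.card V)
    (hτ : ∀ v, 1 ≤ τ v ∧ τ v ≤ G.degree v) :
    sInf {k : ℕ | ∃ D : Finset V, IsTargetSetU G τ D ∧ D.card = k} =
      sInf {k : ℕ | ∃ D : Finset V,
        IsTargetSetW (⊤ : SimpleGraph V)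
          (fun e => if e ∈ G.edgeFinset then (Fintype.card V : ℚ) else 1)
          (fun v => (Fintype.card V : ℚ) * τ v) D ∧ D.card = k} :=
  dyn_eq_dyn_weighted_complete_general G τ
end
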